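/- Gaussian conditioning (scalar Kalman update): for jointly Gaussian (k, y) with k ~ N(a, R), y = α + βk + ε, ε ~ N(0, σ²) independent of k, R > 0, β² R + σ² > 0, the conditional distribution of k given y = y₀ is N(a + s(y₀ − f), R(1 − sβ)), where f = α + βa, Q = β²R + σ², and s = Rβ/Q. -/

import Mathlib

open MeasureTheory ProbabilityTheory Real
open scoped ENNReal NNReal

noncomputable def myker (a f s V : ℝ) : Kernel ℝ ℝ :=
  Kernel.map (Kernel.id ×ₖ Kernel.const ℝ (gaussianReal 0 V.toNNReal))
    (fun p : ℝ × ℝ => a + s * (p.1 - f) + p.2)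

instance (a f s V : ℝ) : IsMarkovKernel (myker a f s V) := by
  unfold myker
  exact Kernel.IsMarkovKernel.map _ (by fun_prop)

lemma myker_apply (a f s V : ℝ) (y : ℝ) :
    myker a f s V y = gaussianReal (a + s * (y - f)) V.toNNReal := by
  unfold myker
  rw [Kernel.map_apply _ (by fun_prop), Kernel.prod_apply, Kernel.id_apply, Kernel.const_apply,
    Measure.dirac_prod, Measure.map_map (by fun_prop) (by fun_prop)]
  rw [show ((fun p : ℝ × ℝ => a + s * (p.1 - f) + p.2) ∘ Prod.mk y)
      = ((a + s * (y - f)) + ·) from rfl, gaussianReal_map_const_add, zero_add]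

lemma pdfReal_id (a α β R v k y : ℝ) (hR : 0 < R) (hv : 0 < v) :
    gaussianPDFReal a R.toNNReal k * gaussianPDFReal (α+β*k) v.toNNReal y
      = gaussianPDFReal (α+β*a) (β^2*R+v).toNNReal y *
        gaussianPDFReal (a+(R*β/(β^2*R+v))*(y-(α+β*a)))
          (R*(1-(R*β/(β^2*R+v))*β)).toNNReal k := by
  have hQ0 : (0:ℝ) < β^2*R+v := by positivity
  have hV : R*(1-(R*β/(β^2*R+v))*β) = R*v/(β^2*R+v) := by field_simp; ring
  rw [hV]
  have hV0 : (0:ℝ) < R*v/(β^2*R+v) := by positivity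
  unfold gaussianPDFReal
  rw [Real.coe_toNNReal _ hR.le, Real.coe_toNNReal _ hv.le, Real.coe_toNNReal _ hQ0.le,
    Real.coe_toNNReal _ hV0.le]
  rw [mul_mul_mul_comm, mul_mul_mul_comm ((√(2*π*(β^2*R+v)))⁻¹)]
  congr 1
  · rw [← mul_inv, ← mul_inv, ← Real.sqrt_mul (by positivity), ← Real.sqrt_mul (by positivity)]
    congr 1
    field_simp
  · rw [← Real.exp_add, ← Real.exp_add]
    congr 1
    field_simp
    ring

set_option maxHeartbeats 1000000 in
lemma key (a α β R v Q f s V : ℝ) (hR : 0 < R) (hv : 0 ≤ v)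
    (hQ : Q = β^2*R+v) (hQpos : 0 < Q) (hf : f = α+β*a) (hs : s = R*β/Q)
    (hV : V = R*(1-s*β)) :
    ((gaussianReal a R.toNNReal).prod (gaussianReal 0 v.toNNReal)).map
        (fun p : ℝ×ℝ => (α + β*p.1 + p.2, p.1))
      = (gaussianReal f Q.toNNReal) ⊗ₘ myker a f s V := by
  subst hV hs hf hQ
  have hψ : Measurable (fun p : ℝ×ℝ => (α + β*p.1 + p.2, p.1)) := by fun_prop
  haveI : IsProbabilityMeasure (((gaussianReal a R.toNNReal).prod (gaussianReal 0 v.toNNReal)).map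
      (fun p : ℝ×ℝ => (α + β*p.1 + p.2, p.1))) := Measure.isProbabilityMeasure_map hψ.aemeasurable
  refine MeasureTheory.ext_of_generate_finite _ generateFrom_prod.symm isPiSystem_prod
    (fun S hS => ?_) (by simp)
  obtain ⟨s', hs', t, ht, rfl⟩ := hS
  simp only [Set.mem_setOf_eq] at hs' ht
  by_cases hv0 : v = 0
  · -- degenerate case v = 0
    subst hv0
    have hβ : β ≠ 0 := by
      rintro rfl
      norm_num at hQpos
    -- LHS
    rw [Measure.map_apply hψ (hs'.prod ht)]
    simp only [Real.toNNReal_zero, gaussianReal_zero_var]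
    rw [Measure.prod_dirac, Measure.map_apply (by fun_prop) (hψ (hs'.prod ht))]
    have hpreeq : ((fun x : ℝ => (x, (0:ℝ))) ⁻¹'
          ((fun p : ℝ × ℝ => (α + β * p.1 + p.2, p.1)) ⁻¹' (s' ×ˢ t)))
        = {x : ℝ | α + β * x ∈ s' ∧ x ∈ t} := by
      ext x; simp
    have hprem : MeasurableSet {x : ℝ | α + β * x ∈ s' ∧ x ∈ t} :=
      (hs'.preimage (by fun_prop : Measurable fun x : ℝ => α + β * x)).inter ht
    rw [hpreeq, ← lintegral_indicator_one hprem]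
    -- RHS
    rw [Measure.compProd_apply_prod hs' ht]
    have hV0 : R * (1 - R * β / (β ^ 2 * R + 0) * β) = 0 := by field_simp; ring
    simp only [myker_apply, hV0, Real.toNNReal_zero, gaussianReal_zero_var]
    simp only [Measure.dirac_apply' _ ht]
    have hbase : gaussianReal (α + β * a) (β ^ 2 * R + 0).toNNReal
        = (gaussianReal a R.toNNReal).map (fun x => α + β * x) := by
      rw [show (fun x : ℝ => α + β * x) = ((α + ·) ∘ (β * ·)) from rfl,
        ← Measure.map_map (by fun_prop) (by fun_prop), gaussianReal_map_const_mul,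
        gaussianReal_map_const_add]
      congr 1
      · ring
      · apply NNReal.coe_injective
        push_cast
        rw [Real.coe_toNNReal _ hR.le, Real.coe_toNNReal _ (by positivity : (0:ℝ) ≤ β^2*R+0)]
        ring
    have hind : Measurable fun yy : ℝ => (t.indicator 1
        (a + R * β / (β ^ 2 * R + 0) * (yy - (α + β * a))) : ℝ≥0∞) :=
      (measurable_one.indicator ht).comp (by fun_prop)
    rw [hbase, ← lintegral_indicator hs', lintegral_map (hind.indicator hs') (by fun_prop)]
    refine lintegral_congr fun x => ?_
    have hm : a + R * β / (β ^ 2 * R + 0) * (α + β * x - (α + β * a)) = x := by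
      field_simp; ring
    classical
    rw [Set.indicator_apply, Set.indicator_apply, hm]
    by_cases h1 : α + β * x ∈ s' <;> by_cases h2 : x ∈ t <;>
      simp [Set.indicator_apply, h1, h2]
  · have hvpos : 0 < v := hv.lt_of_ne (Ne.symm hv0)
    have hv' : v.toNNReal ≠ 0 := (Real.toNNReal_pos.mpr hvpos).ne'
    have hR' : R.toNNReal ≠ 0 := (Real.toNNReal_pos.mpr hR).ne'
    have hQ' : (β ^ 2 * R + v).toNNReal ≠ 0 := (Real.toNNReal_pos.mpr hQpos).ne'
    have hVeq : R * (1 - R * β / (β ^ 2 * R + v) * β) = R * v / (β ^ 2 * R + v) := by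
      field_simp; ring
    have hVpos : 0 < R * (1 - R * β / (β ^ 2 * R + v) * β) := by
      rw [hVeq]; positivity
    have hV' : (R * (1 - R * β / (β ^ 2 * R + v) * β)).toNNReal ≠ 0 :=
      (Real.toNNReal_pos.mpr hVpos).ne'
    have hFmeas : Measurable (fun p : ℝ × ℝ => gaussianPDF (α + β * p.1) v.toNNReal p.2) := by
      unfold gaussianPDF gaussianPDFReal
      exact ENNReal.measurable_ofReal.comp (by fun_prop)
    have hgmeas : Measurable (fun kk => ∫⁻ yy in s', gaussianPDF (α + β * kk) v.toNNReal yy) :=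
      Measurable.lintegral_prod_right (f := fun kk yy => gaussianPDF (α + β * kk) v.toNNReal yy)
        hFmeas
    -- LHS
    rw [Measure.map_apply hψ (hs'.prod ht), Measure.prod_apply (hψ (hs'.prod ht))]
    have h1 : ∀ kk : ℝ, (gaussianReal 0 v.toNNReal)
        (Prod.mk kk ⁻¹' ((fun p : ℝ × ℝ => (α + β * p.1 + p.2, p.1)) ⁻¹' (s' ×ˢ t)))
        = Set.indicator t
            (fun kk => ∫⁻ yy in s', gaussianPDF (α + β * kk) v.toNNReal yy) kk := by
      intro kk
      by_cases hkk : kk ∈ t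
      · rw [Set.indicator_of_mem hkk]
        have hset : Prod.mk kk ⁻¹' ((fun p : ℝ × ℝ => (α + β * p.1 + p.2, p.1)) ⁻¹'
            (s' ×ˢ t)) = ((α + β * kk) + ·) ⁻¹' s' := by
          ext e; simp [hkk]
        rw [hset, ← Measure.map_apply (by fun_prop) hs', gaussianReal_map_const_add, zero_add,
          gaussianReal_apply _ hv']
      · rw [Set.indicator_of_notMem hkk]
        have hset : Prod.mk kk ⁻¹' ((fun p : ℝ × ℝ => (α + β * p.1 + p.2, p.1)) ⁻¹'
            (s' ×ˢ t)) = ∅ := by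
          ext e; simp [hkk]
        simp [hset]
    rw [lintegral_congr h1, lintegral_indicator ht]
    rw [gaussianReal_of_var_ne_zero a hR',
      setLIntegral_withDensity_eq_setLIntegral_mul _ (measurable_gaussianPDF a R.toNNReal)
        hgmeas ht]
    simp only [Pi.mul_apply]
    have h2 : ∀ kk : ℝ, gaussianPDF a R.toNNReal kk *
        ∫⁻ yy in s', gaussianPDF (α + β * kk) v.toNNReal yy
        = ∫⁻ yy in s', gaussianPDF a R.toNNReal kk * gaussianPDF (α + β * kk) v.toNNReal yy :=
      fun kk => (lintegral_const_mul _ (measurable_gaussianPDF _ _)).symm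
    simp only [h2]
    rw [lintegral_lintegral_swap (((measurable_gaussianPDF a R.toNNReal).comp
      measurable_fst).mul hFmeas).aemeasurable]
    -- RHS
    rw [Measure.compProd_apply_prod hs' ht]
    have h3 : ∀ yy : ℝ, myker a (α + β * a) (R * β / (β ^ 2 * R + v))
          (R * (1 - R * β / (β ^ 2 * R + v) * β)) yy t
        = ∫⁻ kk in t, gaussianPDF (a + R * β / (β ^ 2 * R + v) * (yy - (α + β * a)))
            (R * (1 - R * β / (β ^ 2 * R + v) * β)).toNNReal kk :=
      fun yy => by rw [myker_apply, gaussianReal_apply _ hV']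
    simp only [h3]
    have hg2meas : Measurable (fun yy : ℝ => ∫⁻ kk in t,
        gaussianPDF (a + R * β / (β ^ 2 * R + v) * (yy - (α + β * a)))
          (R * (1 - R * β / (β ^ 2 * R + v) * β)).toNNReal kk) :=
      Measurable.lintegral_prod_right
        (by unfold gaussianPDF gaussianPDFReal
            exact ENNReal.measurable_ofReal.comp (by fun_prop))
    rw [gaussianReal_of_var_ne_zero (α + β * a) hQ',
      setLIntegral_withDensity_eq_setLIntegral_mul _
        (measurable_gaussianPDF (α + β * a) (β ^ 2 * R + v).toNNReal) hg2meas hs']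
    simp only [Pi.mul_apply]
    have h4 : ∀ yy : ℝ, gaussianPDF (α + β * a) (β ^ 2 * R + v).toNNReal yy *
        ∫⁻ kk in t, gaussianPDF (a + R * β / (β ^ 2 * R + v) * (yy - (α + β * a)))
          (R * (1 - R * β / (β ^ 2 * R + v) * β)).toNNReal kk
        = ∫⁻ kk in t, gaussianPDF (α + β * a) (β ^ 2 * R + v).toNNReal yy *
            gaussianPDF (a + R * β / (β ^ 2 * R + v) * (yy - (α + β * a)))
              (R * (1 - R * β / (β ^ 2 * R + v) * β)).toNNReal kk :=
      fun yy => (lintegral_const_mul _ (measurable_gaussianPDF _ _)).symm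
    simp only [h4]
    refine lintegral_congr fun yy => lintegral_congr fun kk => ?_
    unfold gaussianPDF
    rw [← ENNReal.ofReal_mul (gaussianPDFReal_nonneg _ _ _),
      ← ENNReal.ofReal_mul (gaussianPDFReal_nonneg _ _ _)]
    exact congrArg ENNReal.ofReal (pdfReal_id a α β R v kk yy hR hvpos)

theorem kalman_update_condDistrib {Ω : Type*} [MeasureSpace Ω] (P : Measure Ω)
    [IsProbabilityMeasure P] (k ε : Ω → ℝ) (a α β : ℝ) (R v : ℝ)
    (hR : 0 < R) (hσ : 0 ≤ v)
    (hk : P.map k = gaussianReal a R.toNNReal)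
    (hε : P.map ε = gaussianReal 0 v.toNNReal)
    (hindep : IndepFun k ε P)
    (hmk : Measurable k) (hmε : Measurable ε)
    (Q : ℝ) (hQ : Q = β ^ 2 * R + v) (hQpos : 0 < Q) :
    ∀ᵐ y₀ ∂(P.map (fun x => α + β * k x + ε x)),
      condDistrib k (fun x => α + β * k x + ε x) P y₀ =
        gaussianReal (a + (R * β / Q) * (y₀ - (α + β * a)))
          (R * (1 - (R * β / Q) * β)).toNNReal := by
  have hmY : Measurable (fun x => α + β * k x + ε x) := by fun_prop
  set κ : Kernel ℝ ℝ := myker a (α + β * a) (R * β / Q) (R * (1 - (R * β / Q) * β)) with hκdef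
  have hjoint : P.map (fun x => (k x, ε x))
      = (gaussianReal a R.toNNReal).prod (gaussianReal 0 v.toNNReal) := by
    rw [← hk, ← hε]
    exact (indepFun_iff_map_prod_eq_prod_map_map hmk.aemeasurable hmε.aemeasurable).mp hindep
  have hkey := key a α β R v Q (α + β * a) (R * β / Q) (R * (1 - (R * β / Q) * β))
    hR hσ hQ hQpos rfl rfl rfl
  have hYk : P.map (fun x => ((α + β * k x + ε x : ℝ), k x))
      = (P.map (fun x => (k x, ε x))).map (fun p : ℝ×ℝ => (α + β*p.1 + p.2, p.1)) := by
    rw [Measure.map_map (by fun_prop) (by fun_prop)]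
    rfl
  have hY : P.map (fun x => α + β * k x + ε x) = gaussianReal (α + β * a) Q.toNNReal := by
    have hψ : Measurable (fun p : ℝ×ℝ => (α + β*p.1 + p.2, p.1)) := by fun_prop
    have h2 := congrArg Measure.fst hkey
    rw [Measure.fst_compProd, Measure.fst, Measure.map_map measurable_fst hψ, ← hjoint] at h2
    rw [← h2, Measure.map_map (by fun_prop) (by fun_prop)]
    rfl
  have hcomp : P.map (fun x => ((α + β * k x + ε x : ℝ), k x))
      = (P.map (fun x => α + β * k x + ε x)) ⊗ₘ κ := by
    rw [hYk, hjoint, hY, hκdef, hkey]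
  have h := condDistrib_ae_eq_of_measure_eq_compProd_of_measurable (μ := P) hmY hmk (κ := κ) hcomp
  filter_upwards [h] with y₀ hy₀
  rw [hy₀, hκdef, myker_apply]
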